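/- In a cone metric space, if S is a T-Chatterjea contraction (there exists c ∈ [0,1/2) with d(TSx,TSy) ≤ c[d(Tx,TSy)+d(Ty,TSx)] for all x,y), then S is a T-weak contraction: there exist δ ∈ (0,1) and L ≥ 0 with d(TSx,TSy) ≤ δ·d(Tx,Ty) + L·d(Ty,TSx) for all x,y ∈ M. -/

import Mathlib

open Filter Topology

variable {E : Type*}

/-- A cone in a real Banach space. -/
def IsCone [NormedAddCommGroup E] [NormedSpace ℝ E] (P : Set E) : Prop :=
  IsClosed P ∧ P.Nonempty ∧ P ≠ {0} ∧
  (∀ (a b : ℝ), 0 ≤ a → 0 ≤ b → ∀ x ∈ P, ∀ y ∈ P, a • x + b • y ∈ P) ∧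
  (∀ x, x ∈ P → -x ∈ P → x = 0)

/-- The partial order induced by the cone `P`: `x ≤ y` iff `y - x ∈ P`. -/
def coneLe [NormedAddCommGroup E] (P : Set E) (x y : E) : Prop := y - x ∈ P

/-- `x ≪ y` iff `y - x ∈ int P`. -/
def coneLt [NormedAddCommGroup E] (P : Set E) (x y : E) : Prop := y - x ∈ interior P

/-- A normal cone with normal constant `K`. -/
def IsNormalCone [NormedAddCommGroup E] (P : Set E) (K : ℝ) : Prop :=
  0 < K ∧ ∀ x y : E, coneLe P 0 x → coneLe P x y → ‖x‖ ≤ K * ‖y‖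

/-- A cone metric on `M` with values in `E`, relative to the cone `P`. -/
def IsConeMetric [NormedAddCommGroup E] {M : Type*} (P : Set E) (d : M → M → E) : Prop :=
  (∀ x y : M, coneLe P 0 (d x y)) ∧
  (∀ x y : M, d x y = 0 ↔ x = y) ∧
  (∀ x y : M, d x y = d y x) ∧
  (∀ x y z : M, coneLe P (d x y) (d x z + d z y))

/-- Convergence of a sequence in a cone metric space. -/
def ConeConverges [NormedAddCommGroup E] {M : Type*} (P : Set E) (d : M → M → E)
    (s : ℕ → M) (x : M) : Prop :=
  ∀ c : E, coneLt P 0 c → ∃ n₀ : ℕ, ∀ n > n₀, coneLt P (d (s n) x) c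

/-- Cauchy sequence in a cone metric space. -/
def ConeCauchy [NormedAddCommGroup E] {M : Type*} (P : Set E) (d : M → M → E)
    (s : ℕ → M) : Prop :=
  ∀ c : E, coneLt P 0 c → ∃ n₀ : ℕ, ∀ n ≥ n₀, ∀ m ≥ n₀, coneLt P (d (s n) (s m)) c

/-- Completeness of a cone metric space. -/
def ConeComplete [NormedAddCommGroup E] {M : Type*} (P : Set E) (d : M → M → E) : Prop :=
  ∀ s : ℕ → M, ConeCauchy P d s → ∃ x : M, ConeConverges P d s x

/-- Continuity of a self-map of a cone metric space. -/
def ConeContinuous [NormedAddCommGroup E] {M : Type*} (P : Set E) (d : M → M → E)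
    (T : M → M) : Prop :=
  ∀ (s : ℕ → M) (x : M), ConeConverges P d s x → ConeConverges P d (fun n => T (s n)) (T x)

/-- `T` is subsequentially convergent. -/
def SubseqConvergent [NormedAddCommGroup E] {M : Type*} (P : Set E) (d : M → M → E)
    (T : M → M) : Prop :=
  ∀ s : ℕ → M, (∃ y, ConeConverges P d (fun n => T (s n)) y) →
    ∃ φ : ℕ → ℕ, StrictMono φ ∧ ∃ z, ConeConverges P d (fun n => s (φ n)) z

/-- `T` is sequentially convergent. -/
def SeqConvergent [NormedAddCommGroup E] {M : Type*} (P : Set E) (d : M → M → E)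
    (T : M → M) : Prop :=
  ∀ s : ℕ → M, (∃ y, ConeConverges P d (fun n => T (s n)) y) →
    ∃ z, ConeConverges P d s z

/-- `S` is a `T`-Zamfirescu mapping. -/
def TZamfirescu [NormedAddCommGroup E] [NormedSpace ℝ E] {M : Type*} (P : Set E)
    (d : M → M → E) (T S : M → M) : Prop :=
  ∃ a b c : ℝ, 0 ≤ a ∧ a < 1 ∧ 0 ≤ b ∧ b < 1/2 ∧ 0 ≤ c ∧ c < 1/2 ∧
    ∀ x y : M,
      coneLe P (d (T (S x)) (T (S y))) (a • d (T x) (T y)) ∨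
      coneLe P (d (T (S x)) (T (S y))) (b • (d (T x) (T (S x)) + d (T y) (T (S y)))) ∨
      coneLe P (d (T (S x)) (T (S y))) (c • (d (T x) (T (S y)) + d (T y) (T (S x))))

/-- `S` is a `T`-weak contraction. -/
def TWeakContraction [NormedAddCommGroup E] [NormedSpace ℝ E] {M : Type*} (P : Set E)
    (d : M → M → E) (T S : M → M) : Prop :=
  ∃ δ L : ℝ, 0 < δ ∧ δ < 1 ∧ 0 ≤ L ∧
    ∀ x y : M, coneLe P (d (T (S x)) (T (S y))) (δ • d (T x) (T y) + L • d (T y) (T (S x)))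

/-!
Chatterjea's condition bounds `d(TSx, TSy)` by `c (d(Tx, TSy) + d(Ty, TSx))`. The triangle
inequality along `Tx, Ty, TSx, TSy` bounds `d(Tx, TSy)` by `d(Tx, Ty) + d(Ty, TSx) + d(TSx, TSy)`,
so `(1 - c) d(TSx, TSy) ≤ c d(Tx, Ty) + 2c d(Ty, TSx)`, which is the weak contraction condition
with `δ = c / (1 - c) < 1` and `L = 2c / (1 - c)`. Enlarging `c` keeps the condition, so `c > 0`
may be assumed, making `δ` positive.
-/

namespace IsCone

variable [NormedAddCommGroup E] [NormedSpace ℝ E] {P : Set E}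

theorem add_mem (hP : IsCone P) {x y : E} (hx : x ∈ P) (hy : y ∈ P) : x + y ∈ P := by
  simpa using hP.2.2.2.1 1 1 zero_le_one zero_le_one x hx y hy

theorem smul_mem (hP : IsCone P) {a : ℝ} (ha : 0 ≤ a) {x : E} (hx : x ∈ P) : a • x ∈ P := by
  simpa using hP.2.2.2.1 a 0 ha le_rfl x hx x hx

theorem zero_mem (hP : IsCone P) : (0 : E) ∈ P := by
  obtain ⟨x, hx⟩ := hP.2.1
  simpa using hP.smul_mem le_rfl hx

theorem coneLe_refl (hP : IsCone P) (x : E) : coneLe P x x := by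
  simpa [coneLe] using hP.zero_mem

theorem coneLe_trans (hP : IsCone P) {x y z : E} (hxy : coneLe P x y) (hyz : coneLe P y z) :
    coneLe P x z := by
  simpa [coneLe] using hP.add_mem hyz hxy

theorem coneLe_add (hP : IsCone P) {x y x' y' : E} (h : coneLe P x y) (h' : coneLe P x' y') :
    coneLe P (x + x') (y + y') := by
  simpa [coneLe, add_sub_add_comm] using hP.add_mem h h'

theorem coneLe_smul (hP : IsCone P) {a : ℝ} (ha : 0 ≤ a) {x y : E} (h : coneLe P x y) :
    coneLe P (a • x) (a • y) := by
  simpa [coneLe, smul_sub] using hP.smul_mem ha h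

theorem coneLe_smul_of_le (hP : IsCone P) {a b : ℝ} (hab : a ≤ b) {x : E} (hx : coneLe P 0 x) :
    coneLe P (a • x) (b • x) := by
  simpa [coneLe, sub_smul] using hP.smul_mem (sub_nonneg.2 hab) hx

end IsCone

theorem coneLe_sub_right [NormedAddCommGroup E] {P : Set E} {x y : E} (z : E)
    (h : coneLe P x y) : coneLe P (x - z) (y - z) := by
  simpa [coneLe] using h

theorem IsConeMetric.triangle4 [NormedAddCommGroup E] [NormedSpace ℝ E] {M : Type*} {P : Set E}
    (hP : IsCone P) {d : M → M → E} (hd : IsConeMetric P d) (x y z w : M) :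
    coneLe P (d x w) (d x y + d y z + d z w) := by
  have hyw : coneLe P (d x y + d y w) (d x y + (d y z + d z w)) :=
    hP.coneLe_add (hP.coneLe_refl _) (hd.2.2.2 y w z)
  rw [← add_assoc] at hyw
  exact hP.coneLe_trans (hd.2.2.2 x w y) hyw

def TChatterjea [NormedAddCommGroup E] [NormedSpace ℝ E] {M : Type*} (P : Set E)
    (d : M → M → E) (T S : M → M) (c : ℝ) : Prop :=
  ∀ x y : M, coneLe P (d (T (S x)) (T (S y))) (c • (d (T x) (T (S y)) + d (T y) (T (S x))))

namespace TChatterjea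

variable [NormedAddCommGroup E] [NormedSpace ℝ E] {M : Type*} {P : Set E} {d : M → M → E}
  {T S : M → M} {c : ℝ}

theorem mono (hP : IsCone P) (hd : IsConeMetric P d) (h : TChatterjea P d T S c) {c' : ℝ}
    (hcc' : c ≤ c') : TChatterjea P d T S c' := fun x y =>
  hP.coneLe_trans (h x y) <| hP.coneLe_smul_of_le hcc' <| by
    simpa [coneLe] using hP.add_mem (hd.1 _ _) (hd.1 _ _)

theorem coneLe_smul_add_smul (hP : IsCone P) (hd : IsConeMetric P d) (h : TChatterjea P d T S c)
    (hc0 : 0 ≤ c) (hc1 : c < 1) (x y : M) :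
    coneLe P (d (T (S x)) (T (S y)))
      ((c / (1 - c)) • d (T x) (T y) + (2 * c / (1 - c)) • d (T y) (T (S x))) := by
  set A := d (T x) (T y)
  set B := d (T y) (T (S x))
  set D := d (T (S x)) (T (S y))
  have hX : coneLe P (d (T x) (T (S y)) + B) (A + B + D + B) :=
    hP.coneLe_add (hd.triangle4 hP (T x) (T y) (T (S x)) (T (S y))) (hP.coneLe_refl B)
  have hD : coneLe P D (c • A + (2 * c) • B + c • D) := by
    convert hP.coneLe_trans (h x y) (hP.coneLe_smul hc0 hX) using 1
    module
  have hD' : coneLe P ((1 - c) • D) (c • A + (2 * c) • B) := by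
    convert coneLe_sub_right (c • D) hD using 1 <;> module
  have hpos : 0 < 1 - c := sub_pos.2 hc1
  convert hP.coneLe_smul (inv_nonneg.2 hpos.le) hD' using 1
  · rw [smul_smul, inv_mul_cancel₀ hpos.ne', one_smul]
  · rw [smul_add, smul_smul, smul_smul, div_eq_inv_mul, div_eq_inv_mul]

theorem tWeakContraction (hP : IsCone P) (hd : IsConeMetric P d) (h : TChatterjea P d T S c)
    (hc0 : 0 < c) (hc : c < 1 / 2) : TWeakContraction P d T S := by
  have hpos : 0 < 1 - c := by linarith
  refine ⟨c / (1 - c), 2 * c / (1 - c), by positivity, ?_, by positivity,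
    h.coneLe_smul_add_smul hP hd hc0.le (by linarith)⟩
  rw [div_lt_one hpos]
  linarith

end TChatterjea

theorem tc_implies_tweak_general {E M : Type*} [NormedAddCommGroup E]
    [NormedSpace ℝ E] (P : Set E) (hP : IsCone P)
    (d : M → M → E) (hd : IsConeMetric P d) (T S : M → M)
    (hTC : ∃ c : ℝ, 0 ≤ c ∧ c < 1/2 ∧
      ∀ x y : M, coneLe P (d (T (S x)) (T (S y)))
        (c • (d (T x) (T (S y)) + d (T y) (T (S x))))) :
    TWeakContraction P d T S := by
  obtain ⟨c, -, hc, hTC⟩ := hTC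
  have hTC' : TChatterjea P d T S (max c (1 / 4)) := TChatterjea.mono hP hd hTC (le_max_left _ _)
  exact hTC'.tWeakContraction hP hd (by positivity) (max_lt hc (by norm_num))

theorem tc_implies_tweak {E M : Type*} [NormedAddCommGroup E]
    [NormedSpace ℝ E] [CompleteSpace E] (P : Set E) (hP : IsCone P)
    (d : M → M → E) (hd : IsConeMetric P d) (T S : M → M)
    (hTC : ∃ c : ℝ, 0 ≤ c ∧ c < 1/2 ∧
      ∀ x y : M, coneLe P (d (T (S x)) (T (S y)))
        (c • (d (T x) (T (S y)) + d (T y) (T (S x))))) :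
    TWeakContraction P d T S :=
  tc_implies_tweak_general P hP d hd T S hTC
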